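/- Let γ₁ < ... < γ_{l+1}, γ̃ := (γ₂-γ₁,...,γ_{l+1}-γ_l), and g := (1/h)(𝟙ⱼ^β - 𝟙ᵢ^α) ∈ ℝˡ with i ≤ j (and β ≥ α if i = j). Then ⟨γ̃, g⟩ = (1/h)(γⱼ^β - γᵢ^α) = sup_{q∈K}⟨q,g⟩ where K := {q ∈ ℝˡ : |q_k| ≤ γ_{k+1}-γ_k ∀k}; i.e., γ̃ itself is a dual maximizer whenever g has nonnegative entries. -/

import Mathlib

open scoped BigOperators

/-- The lifted representative `𝟙ᵢ^α = α𝟙ᵢ + (1-α)𝟙_{i-1} ∈ ℝˡ` (with zero-based index `i`):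
entries `1` below `i`, value `α` at `i`, `0` above. -/
def oneVec {l : ℕ} (i : Fin l) (α : ℝ) : Fin l → ℝ :=
  fun k => if (k : ℕ) < (i : ℕ) then 1 else if k = i then α else 0

/-- The sublabel value `γᵢ^α = γᵢ + α(γ_{i+1} - γᵢ)` (zero-based index `i`). -/
def gam {l : ℕ} (γ : Fin (l + 1) → ℝ) (i : Fin l) (α : ℝ) : ℝ :=
  γ i.castSucc + α * (γ i.succ - γ i.castSucc)

/-!
Pairing `γ̃` with `𝟙ᵢ^α` telescopes to `γᵢ^α - γ₀`, which gives the first identity. Over the box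
`|q_k| ≤ w_k` the functional `q ↦ ⟨q, g⟩` is maximized at `q_k = ±w_k`, with value `∑ w_k |g_k|`.
Since `i ≤ j` (and `α ≤ β` if `i = j`) makes `𝟙ⱼ^β ≥ 𝟙ᵢ^α` entrywise, `g ≥ 0`, so the maximizing
signs are all `+` and the maximizer is `γ̃` itself.
-/

open Finset

theorem Fin.sum_Iio_succ_sub_castSucc {G : Type*} [AddCommGroup G] {l : ℕ} (f : Fin (l + 1) → G)
    (i : Fin l) : ∑ k ∈ Iio i, (f k.succ - f k.castSucc) = f i.castSucc - f 0 := by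
  cases l with
  | zero => exact i.elim0
  | succ m =>
    induction i using Fin.induction with
    | zero => simp [show Iio (0 : Fin (m + 1)) = ∅ by ext; simp]
    | succ j ih =>
      have hIio : Iio j.succ = Iic j.castSucc := by ext k; simp [Fin.lt_def, Fin.le_def]
      rw [hIio, Iic_eq_cons_Iio, Finset.sum_cons, ih]
      simp

theorem sum_mul_oneVec {l : ℕ} (w : Fin l → ℝ) (i : Fin l) (α : ℝ) :
    ∑ k, w k * oneVec i α k = ∑ k ∈ Iio i, w k + α * w i := by
  have hsplit : ∀ k, w k * oneVec i α k
      = (if k ∈ Iio i then w k else 0) + (if i = k then α * w k else 0) := by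
    intro k
    rcases lt_trichotomy k i with hk | rfl | hk
    · simp [oneVec, hk, hk.ne']
    · simp [oneVec, mul_comm]
    · simp [oneVec, hk.ne, hk.ne', hk.not_gt]
  simp only [hsplit, sum_add_distrib, sum_ite_mem, univ_inter, sum_ite_eq, mem_univ, if_true]

theorem sum_sub_mul_oneVec {l : ℕ} (γ : Fin (l + 1) → ℝ) (i : Fin l) (α : ℝ) :
    ∑ k, (γ k.succ - γ k.castSucc) * oneVec i α k = gam γ i α - γ 0 := by
  rw [sum_mul_oneVec, Fin.sum_Iio_succ_sub_castSucc, gam]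
  ring

theorem oneVec_le_oneVec {l : ℕ} {i j : Fin l} (hij : i ≤ j) {α β : ℝ} (hα : α ≤ 1) (hβ : 0 ≤ β)
    (hord : i = j → α ≤ β) : oneVec i α ≤ oneVec j β := by
  intro k
  have hij' : (i : ℕ) ≤ j := hij
  simp only [oneVec]
  split_ifs <;> subst_vars <;> first | omega | linarith [hord rfl] | linarith

theorem isGreatest_sum_mul_of_abs_le {ι : Type*} [Fintype ι] {w : ι → ℝ} (hw : 0 ≤ w)
    (g : ι → ℝ) :
    IsGreatest {x | ∃ q ∈ {q : ι → ℝ | ∀ k, |q k| ≤ w k}, x = ∑ k, q k * g k}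
      (∑ k, w k * |g k|) := by
  refine ⟨⟨fun k => if 0 ≤ g k then w k else -w k, fun k => ?_, ?_⟩, ?_⟩
  · dsimp only
    split_ifs <;> simp [abs_of_nonneg (hw k)]
  · refine sum_congr rfl fun k _ => ?_
    dsimp only
    split_ifs with hg
    · rw [abs_of_nonneg hg]
    · rw [abs_of_neg (not_le.1 hg)]; ring
  · rintro x ⟨q, hq, rfl⟩
    refine sum_le_sum fun k _ => ?_
    calc q k * g k ≤ |q k| * |g k| := by rw [← abs_mul]; exact le_abs_self _
      _ ≤ w k * |g k| := by gcongr; exact hq k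

theorem gamma_tilde_is_dual_maximizer {l : ℕ} (γ : Fin (l + 1) → ℝ) (hγ : StrictMono γ)
    (i j : Fin l) (hij : i ≤ j)
    (α β : ℝ) (hα : α ∈ Set.Icc (0 : ℝ) 1) (hβ : β ∈ Set.Icc (0 : ℝ) 1)
    (hord : i = j → α ≤ β)
    (h : ℝ) (hh : 0 < h)
    (g : Fin l → ℝ) (hg : g = (1 / h) • (oneVec j β - oneVec i α))
    (K : Set (Fin l → ℝ))
    (hK : K = {q : Fin l → ℝ | ∀ k : Fin l, |q k| ≤ γ k.succ - γ k.castSucc}) :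
    ∑ k : Fin l, (γ k.succ - γ k.castSucc) * g k = (1 / h) * (gam γ j β - gam γ i α) ∧
    sSup {x : ℝ | ∃ q ∈ K, x = ∑ k : Fin l, q k * g k}
      = (1 / h) * (gam γ j β - gam γ i α) := by
  have hsum : ∑ k, (γ k.succ - γ k.castSucc) * g k = (1 / h) * (gam γ j β - gam γ i α) := by
    simp only [hg, Pi.smul_apply, Pi.sub_apply, smul_eq_mul, mul_sub, mul_left_comm _ (1 / h),
      ← mul_sum, sum_sub_distrib, sum_sub_mul_oneVec]
    ring
  have hg_nonneg : 0 ≤ g :=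
    hg ▸ smul_nonneg (by positivity) (sub_nonneg.2 (oneVec_le_oneVec hij hα.2 hβ.1 hord))
  have hw : 0 ≤ fun k : Fin l => γ k.succ - γ k.castSucc :=
    fun k => sub_nonneg.2 (hγ k.castSucc_lt_succ).le
  refine ⟨hsum, ?_⟩
  rw [hK, (isGreatest_sum_mul_of_abs_le hw g).csSup_eq, ← hsum]
  simp only [abs_of_nonneg (hg_nonneg _)]
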